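/- Let n ≥ 6 be an integer. The cubic g₃(t) := 8(2n−1)(2n−3)(2n−5)·t³ + 12(n−3)(2n−3)(2n−5)·t² + 6(n−3)(n−4)(2n−5)·t + (n−3)(n−4)(n−5) has exactly three real roots t₁ < t₂ < t₃, all lying in the open interval (−1/4, 0), and they interlace with the two roots t̂₁ < t̂₂ of the quadratic q̃(t) := 4(2n−3)(2n−5)·t² + 4(n−4)(2n−5)·t + (n−4)(n−5), namely −1/4 < t₁ < t̂₁ < t₂ < t̂₂ < t₃ < 0, where t̂_{1,2} = −(n−4)/(2(2n−3)) ∓ √(5(n−4)(2n−5))/(2(2n−3)(2n−5)). -/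

import Mathlib

/-!
Division by `q̃` gives `(2n-3)·g₃(t) = L(t)·q̃(t) - 10(n-4)·(2(2n-7)t + (n-5))` with `L` linear, so
at a root of `q̃` the sign of `g₃` is that of `t* - t`, where `t* = -(n-5)/(2(2n-7))`. Since
`q̃(t*) < 0`, the point `t*` separates `t̂₁` and `t̂₂`, whence `g₃(t̂₁) > 0 > g₃(t̂₂)`; moreover
`t* ∈ (-1/4, 0)` and `q̃(-1/4), q̃(0) > 0`, so `-1/4 < t̂₁ < t̂₂ < 0`. With `g₃(-1/4) < 0 < g₃(0)` the
intermediate value theorem puts a root of `g₃` in each of the three gaps, and a cubic has no others.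
-/

/-- The cubic `g₃(t)`. -/
noncomputable def g3 (n : ℕ) (t : ℝ) : ℝ :=
  8 * (2 * (n : ℝ) - 1) * (2 * (n : ℝ) - 3) * (2 * (n : ℝ) - 5) * t ^ 3 +
  12 * ((n : ℝ) - 3) * (2 * (n : ℝ) - 3) * (2 * (n : ℝ) - 5) * t ^ 2 +
  6 * ((n : ℝ) - 3) * ((n : ℝ) - 4) * (2 * (n : ℝ) - 5) * t +
  ((n : ℝ) - 3) * ((n : ℝ) - 4) * ((n : ℝ) - 5)

/-- The quadratic `q̃(t)`. -/
noncomputable def qt (n : ℕ) (t : ℝ) : ℝ :=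
  4 * (2 * (n : ℝ) - 3) * (2 * (n : ℝ) - 5) * t ^ 2 +
  4 * ((n : ℝ) - 4) * (2 * (n : ℝ) - 5) * t +
  ((n : ℝ) - 4) * ((n : ℝ) - 5)

/-- The smaller root `t̂₁` of `q̃`. -/
noncomputable def that1 (n : ℕ) : ℝ :=
  -(((n : ℝ) - 4) / (2 * (2 * (n : ℝ) - 3))) -
    Real.sqrt (5 * ((n : ℝ) - 4) * (2 * (n : ℝ) - 5)) /
      (2 * (2 * (n : ℝ) - 3) * (2 * (n : ℝ) - 5))

/-- The larger root `t̂₂` of `q̃`. -/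
noncomputable def that2 (n : ℕ) : ℝ :=
  -(((n : ℝ) - 4) / (2 * (2 * (n : ℝ) - 3))) +
    Real.sqrt (5 * ((n : ℝ) - 4) * (2 * (n : ℝ) - 5)) /
      (2 * (2 * (n : ℝ) - 3) * (2 * (n : ℝ) - 5))

open Set

theorem mul_sub_mul_sub_neg_iff {R : Type*} [CommRing R] [LinearOrder R] [IsStrictOrderedRing R]
    {a r₁ r₂ t : R} (ha : 0 < a) (hr : r₁ ≤ r₂) :
    a * (t - r₁) * (t - r₂) < 0 ↔ r₁ < t ∧ t < r₂ := by
  rw [mul_assoc, ← neg_pos, ← mul_neg, mul_pos_iff_of_pos_left ha, neg_mul_eq_mul_neg, neg_sub,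
    mul_pos_iff]
  constructor
  · rintro (⟨h₁, h₂⟩ | ⟨h₁, h₂⟩) <;> constructor <;> linarith
  · rintro ⟨h₁, h₂⟩
    exact Or.inl ⟨by linarith, by linarith⟩

theorem mul_sub_mul_sub_pos_iff {R : Type*} [CommRing R] [LinearOrder R] [IsStrictOrderedRing R]
    {a r₁ r₂ t : R} (ha : 0 < a) (hr : r₁ ≤ r₂) :
    0 < a * (t - r₁) * (t - r₂) ↔ t < r₁ ∨ r₂ < t := by
  rw [mul_assoc, mul_pos_iff_of_pos_left ha, mul_pos_iff]
  constructor
  · rintro (⟨h₁, h₂⟩ | ⟨h₁, h₂⟩)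
    · exact Or.inr (by linarith)
    · exact Or.inl (by linarith)
  · rintro (h | h)
    · exact Or.inr ⟨by linarith, by linarith⟩
    · exact Or.inl ⟨by linarith, by linarith⟩

theorem exists_three_zeros_of_sign_changes {α δ : Type*} [ConditionallyCompleteLinearOrder α]
    [TopologicalSpace α] [OrderTopology α] [DenselyOrdered α] [LinearOrder δ] [TopologicalSpace δ]
    [OrderClosedTopology δ] [Zero δ] {f : α → δ} (hf : Continuous f) {a b c d : α}
    (hab : a < b) (hbc : b < c) (hcd : c < d)
    (ha : f a < 0) (hb : 0 < f b) (hc : f c < 0) (hd : 0 < f d) :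
    ∃ x₁ x₂ x₃ : α, f x₁ = 0 ∧ f x₂ = 0 ∧ f x₃ = 0 ∧
      a < x₁ ∧ x₁ < b ∧ b < x₂ ∧ x₂ < c ∧ c < x₃ ∧ x₃ < d := by
  obtain ⟨x₁, ⟨h₁, h₁'⟩, hx₁⟩ := intermediate_value_Ioo hab.le hf.continuousOn ⟨ha, hb⟩
  obtain ⟨x₂, ⟨h₂, h₂'⟩, hx₂⟩ := intermediate_value_Ioo' hbc.le hf.continuousOn ⟨hc, hb⟩
  obtain ⟨x₃, ⟨h₃, h₃'⟩, hx₃⟩ := intermediate_value_Ioo hcd.le hf.continuousOn ⟨hc, hd⟩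
  exact ⟨x₁, x₂, x₃, hx₁, hx₂, hx₃, h₁, h₁', h₂, h₂', h₃, h₃'⟩

theorem cubic_eq_zero_iff_of_roots {R : Type*} [CommRing R] [IsDomain R]
    {a b c d x₁ x₂ x₃ : R} (ha : a ≠ 0)
    (h₁₂ : x₁ ≠ x₂) (h₁₃ : x₁ ≠ x₃) (h₂₃ : x₂ ≠ x₃)
    (h₁ : a * x₁ ^ 3 + b * x₁ ^ 2 + c * x₁ + d = 0)
    (h₂ : a * x₂ ^ 3 + b * x₂ ^ 2 + c * x₂ + d = 0)
    (h₃ : a * x₃ ^ 3 + b * x₃ ^ 2 + c * x₃ + d = 0) (t : R) :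
    a * t ^ 3 + b * t ^ 2 + c * t + d = 0 ↔ t = x₁ ∨ t = x₂ ∨ t = x₃ := by
  have hfactor : a * t ^ 3 + b * t ^ 2 + c * t + d = a * (t - x₁) * (t - x₂) * (t - x₃) := by
    -- Lagrange interpolation at `x₁, x₂, x₃`, after clearing the denominators
    apply mul_left_cancel₀ (mul_ne_zero (mul_ne_zero (sub_ne_zero.2 h₁₂) (sub_ne_zero.2 h₁₃))
      (sub_ne_zero.2 h₂₃))
    linear_combination ((x₂ - x₃) * (t - x₂) * (t - x₃)) * h₁
      - ((x₁ - x₃) * (t - x₁) * (t - x₃)) * h₂ + ((x₁ - x₂) * (t - x₁) * (t - x₂)) * h₃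
  simp only [hfactor, mul_eq_zero, sub_eq_zero, ha, false_or, or_assoc]

section
variable {n : ℕ}

theorem qt_eq_mul (hn : 4 ≤ n) (t : ℝ) :
    qt n t = 4 * (2 * n - 3) * (2 * n - 5) * (t - that1 n) * (t - that2 n) := by
  have hn' : (4 : ℝ) ≤ n := by exact_mod_cast hn
  have hQ : (2 * n - 3 : ℝ) ≠ 0 := by linarith
  have hP : (2 * n - 5 : ℝ) ≠ 0 := by linarith
  have hs : √(5 * (n - 4) * (2 * n - 5) : ℝ) ^ 2 = 5 * (n - 4) * (2 * n - 5) :=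
    Real.sq_sqrt (mul_nonneg (mul_nonneg (by norm_num) (by linarith)) (by linarith))
  unfold qt that1 that2
  generalize √(5 * (n - 4) * (2 * n - 5) : ℝ) = s at hs ⊢
  field_simp
  linear_combination 4 * hs

theorem qt_that1 (hn : 4 ≤ n) : qt n (that1 n) = 0 := by
  simp [qt_eq_mul hn]

theorem qt_that2 (hn : 4 ≤ n) : qt n (that2 n) = 0 := by
  simp [qt_eq_mul hn]

theorem that1_lt_that2 (hn : 5 ≤ n) : that1 n < that2 n := by
  have hn' : (5 : ℝ) ≤ n := by exact_mod_cast hn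
  have hs : 0 < √(5 * (n - 4) * (2 * n - 5) : ℝ) :=
    Real.sqrt_pos.2 (mul_pos (mul_pos (by norm_num) (by linarith)) (by linarith))
  have hD : (0 : ℝ) < 2 * (2 * n - 3) * (2 * n - 5) :=
    mul_pos (mul_pos (by norm_num) (by linarith)) (by linarith)
  unfold that1 that2
  linarith [div_pos hs hD]

theorem qt_neg_iff (hn : 5 ≤ n) {t : ℝ} : qt n t < 0 ↔ that1 n < t ∧ t < that2 n := by
  have hn' : (5 : ℝ) ≤ n := by exact_mod_cast hn
  rw [qt_eq_mul (by omega)]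
  exact mul_sub_mul_sub_neg_iff (mul_pos (mul_pos (by norm_num) (by linarith)) (by linarith))
    (that1_lt_that2 hn).le

theorem qt_pos_iff (hn : 5 ≤ n) {t : ℝ} : 0 < qt n t ↔ t < that1 n ∨ that2 n < t := by
  have hn' : (5 : ℝ) ≤ n := by exact_mod_cast hn
  rw [qt_eq_mul (by omega)]
  exact mul_sub_mul_sub_pos_iff (mul_pos (mul_pos (by norm_num) (by linarith)) (by linarith))
    (that1_lt_that2 hn).le

theorem mul_g3_eq (n : ℕ) (t : ℝ) :
    (2 * n - 3) * g3 n t = (2 * (2 * n - 1) * (2 * n - 3) * t + (2 * n ^ 2 - 9 * n + 19)) * qt n t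
      - 10 * (n - 4) * (2 * (2 * n - 7) * t + (n - 5)) := by
  unfold g3 qt
  ring

/-- The root of the remainder in `mul_g3_eq`. -/
noncomputable def g3RemRoot (n : ℕ) : ℝ := -((n : ℝ) - 5) / (2 * (2 * n - 7))

theorem qt_g3RemRoot (n : ℕ) :
    qt n (g3RemRoot n) = -3 * (n - 5) * (2 * n - 3) / (2 * n - 7) ^ 2 := by
  have h : (2 * n - 7 : ℝ) ≠ 0 := by
    intro h
    have : (2 * n : ℝ) = 7 := by linarith
    norm_cast at this
    omega
  unfold qt g3RemRoot
  field_simp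
  ring

theorem g3RemRoot_mem_Ioo (hn : 6 ≤ n) : g3RemRoot n ∈ Ioo (-(1 / 4)) 0 := by
  have hn' : (6 : ℝ) ≤ n := by exact_mod_cast hn
  have h7 : (0 : ℝ) < 2 * (2 * n - 7) := by linarith
  unfold g3RemRoot
  constructor
  · rw [lt_div_iff₀ h7]; linarith
  · rw [div_lt_iff₀ h7]; linarith

theorem g3RemRoot_mem_Ioo_that1_that2 (hn : 6 ≤ n) : g3RemRoot n ∈ Ioo (that1 n) (that2 n) := by
  have hn' : (6 : ℝ) ≤ n := by exact_mod_cast hn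
  rw [mem_Ioo, ← qt_neg_iff (by omega), qt_g3RemRoot]
  have h7 : (0 : ℝ) < 2 * n - 7 := by linarith
  exact div_neg_of_neg_of_pos (by nlinarith) (by positivity)

theorem g3_pos_of_qt_eq_zero (hn : 5 ≤ n) {t : ℝ} (hq : qt n t = 0) (ht : t < g3RemRoot n) :
    0 < g3 n t := by
  have hn' : (5 : ℝ) ≤ n := by exact_mod_cast hn
  have h := mul_g3_eq n t
  rw [hq] at h
  rw [g3RemRoot, lt_div_iff₀ (by linarith)] at ht
  nlinarith

theorem g3_neg_of_qt_eq_zero (hn : 5 ≤ n) {t : ℝ} (hq : qt n t = 0) (ht : g3RemRoot n < t) :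
    g3 n t < 0 := by
  have hn' : (5 : ℝ) ≤ n := by exact_mod_cast hn
  have h := mul_g3_eq n t
  rw [hq] at h
  rw [g3RemRoot, div_lt_iff₀ (by linarith)] at ht
  nlinarith

theorem neg_one_fourth_lt_that1 (hn : 6 ≤ n) : -(1 / 4) < that1 n := by
  have hq : 0 < qt n (-(1 / 4)) := by
    rw [show qt n (-(1 / 4)) = 15 / 4 by unfold qt; ring]
    norm_num
  rcases (qt_pos_iff (by omega)).1 hq with h | h
  · exact h
  · linarith [(g3RemRoot_mem_Ioo hn).1, (g3RemRoot_mem_Ioo_that1_that2 hn).2]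

theorem that2_neg (hn : 6 ≤ n) : that2 n < 0 := by
  have hn' : (6 : ℝ) ≤ n := by exact_mod_cast hn
  have hq : 0 < qt n 0 := by
    rw [show qt n 0 = (n - 4) * (n - 5) by unfold qt; ring]
    exact mul_pos (by linarith) (by linarith)
  rcases (qt_pos_iff (by omega)).1 hq with h | h
  · linarith [(g3RemRoot_mem_Ioo hn).2, (g3RemRoot_mem_Ioo_that1_that2 hn).1]
  · exact h

end

theorem stmt16 (n : ℕ) (hn : 6 ≤ n) :
    qt n (that1 n) = 0 ∧ qt n (that2 n) = 0 ∧
    ∃ t1 t2 t3 : ℝ,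
      (∀ t : ℝ, g3 n t = 0 ↔ t = t1 ∨ t = t2 ∨ t = t3) ∧
      -(1 / 4) < t1 ∧ t1 < that1 n ∧ that1 n < t2 ∧ t2 < that2 n ∧
      that2 n < t3 ∧ t3 < 0 := by
  have hn' : (6 : ℝ) ≤ n := by exact_mod_cast hn
  obtain ⟨hr₁, hr₂⟩ := g3RemRoot_mem_Ioo_that1_that2 hn
  have hg3_lo : g3 n (-(1 / 4)) < 0 := by
    rw [show g3 n (-(1 / 4)) = -(15 / 8) by unfold g3; ring]
    norm_num
  have hg3_hi : 0 < g3 n 0 := by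
    rw [show g3 n 0 = (n - 3) * (n - 4) * (n - 5) by unfold g3; ring]
    exact mul_pos (mul_pos (by linarith) (by linarith)) (by linarith)
  obtain ⟨t1, t2, t3, h1, h2, h3, ht⟩ := exists_three_zeros_of_sign_changes
    (by unfold g3; fun_prop) (neg_one_fourth_lt_that1 hn) (that1_lt_that2 (by omega))
    (that2_neg hn) hg3_lo
    (g3_pos_of_qt_eq_zero (by omega) (qt_that1 (by omega)) hr₁)
    (g3_neg_of_qt_eq_zero (by omega) (qt_that2 (by omega)) hr₂) hg3_hi
  have ha : 8 * (2 * (n : ℝ) - 1) * (2 * n - 3) * (2 * n - 5) ≠ 0 :=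
    (mul_pos (mul_pos (mul_pos (by norm_num) (by linarith)) (by linarith)) (by linarith)).ne'
  refine ⟨qt_that1 (by omega), qt_that2 (by omega), t1, t2, t3,
    cubic_eq_zero_iff_of_roots ha ?_ ?_ ?_ h1 h2 h3, ht⟩ <;> linarith
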